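/- There exists a family of maps (M_q)_{q≥1}, M_q : ℝ → ℝ^{d×d}, such that: (i) each M_q belongs to L^∞_loc(ℝ, ℝ^{d×d}); (ii) M_q(t) = 0 whenever t ∉ (σ_q − η_M, σ_q]; (iii) for every p ∈ [1,∞] and every φ ∈ L^p([−η_M,0],ℝ^d), the unique solution z of the difference-delay system z(t) = Σ_{i=1}^M D_i(t) z(t−η_i) with initial condition φ satisfies z(t) = Σ_{q=1}^∞ M_q(t) φ(t − σ_q) for a.e. t ≥ 0, where for each t ≥ 0 all but the finitely many terms with σ_q ≤ t + η_M vanish (so the sum is finite and does not depend on values of φ outside [−η_M,0]). -/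

import Mathlib

open MeasureTheory Matrix Filter Set
open scoped ENNReal

/-- Euclidean norm of a vector in `ℝ^ι`. -/
noncomputable def euclNorm {ι : Type*} [Fintype ι] (x : ι → ℝ) : ℝ :=
  Real.sqrt (∑ j, (x j) ^ 2)

/-- `z` belongs to `L^p_loc([-ηM, ∞), ℝ^d)` and satisfies the time-varying difference-delay
system `z(t) = ∑ i, D i (t) * z (t - η i)` for a.e. `t ≥ 0` (`ηM` is the largest delay;
the values of `z` on `[-ηM, 0]` are its initial condition). -/
def DelaySol (d M : ℕ) (η : Fin M → ℝ) (D : Fin M → ℝ → Matrix (Fin d) (Fin d) ℝ)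
    (ηM : ℝ) (p : ℝ≥0∞) (z : ℝ → Fin d → ℝ) : Prop :=
  (∀ b : ℝ, MemLp z p (volume.restrict (Set.Icc (-ηM) b))) ∧
  (∀ᵐ t ∂(volume.restrict (Set.Ici (0 : ℝ))), z t = ∑ i, (D i t).mulVec (z (t - η i)))

/-- `L^p` exponential stability of the difference-delay system. -/
def DelayLpStable (d M : ℕ) (η : Fin M → ℝ) (D : Fin M → ℝ → Matrix (Fin d) (Fin d) ℝ)
    (ηM : ℝ) (p : ℝ≥0∞) : Prop :=
  ∃ C > (0 : ℝ), ∃ γ > (0 : ℝ), ∀ z, DelaySol d M η D ηM p z → ∀ t ≥ (0 : ℝ),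
    eLpNorm (fun θ => euclNorm (z (t + θ))) p (volume.restrict (Set.Icc (-ηM) 0)) ≤
      ENNReal.ofReal (C * Real.exp (-γ * t)) *
        eLpNorm (fun θ => euclNorm (z θ)) p (volume.restrict (Set.Icc (-ηM) 0))

/-- `C⁰` exponential stability of the difference-delay system: continuous solutions
(the equation holding for all `t ≥ 0` forces the compatibility condition at `t = 0`). -/
def DelayC0Stable (d M : ℕ) (η : Fin M → ℝ) (D : Fin M → ℝ → Matrix (Fin d) (Fin d) ℝ)
    (ηM : ℝ) : Prop :=
  ∃ C > (0 : ℝ), ∃ γ > (0 : ℝ), ∀ z : ℝ → Fin d → ℝ,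
    ContinuousOn z (Set.Ici (-ηM)) →
    (∀ t ≥ (0 : ℝ), z t = ∑ i, (D i t).mulVec (z (t - η i))) →
    ∀ t ≥ (0 : ℝ), ∀ θ ∈ Set.Icc (-ηM) (0 : ℝ),
      euclNorm (z (t + θ)) ≤ C * Real.exp (-γ * t) *
        ⨆ θ' : Set.Icc (-ηM) (0 : ℝ), euclNorm (z (θ' : ℝ))

/-!
Unfolding the equation `z t = ∑ i, D i t *ᵥ z (t - η i)` repeatedly writes `z t` as a sum over
words `[i₁, …, i_k]` of delays: the word contributes
`D i₁ t * D i₂ (t - η i₁) * ⋯ *ᵥ φ (t - η i₁ - ⋯ - η i_k)` exactly when the times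
`t, t - η i₁, …` stay nonnegative until the last one, which then lies in `[-ηM, 0)`. As the
delays are bounded below, only finitely many words contribute at each time, and grouping the
words by their total delay `σ q` gives `M_q`, a finite sum of products of essentially bounded
coefficients. The equation and the initial condition hold only almost everywhere, but the
unfolding at time `t` uses them only at the countably many times `t - σ q`, so it is valid
for almost every `t`.
-/

open Function

lemma exists_pos_forall_le {ι : Type*} [Finite ι] {η : ι → ℝ} (hη : ∀ i, 0 < η i) :
    ∃ c > 0, ∀ i, c ≤ η i := by
  cases isEmpty_or_nonempty ι
  · exact ⟨1, one_pos, fun i => isEmptyElim i⟩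
  · obtain ⟨i₀, hi₀⟩ := Finite.exists_min η
    exact ⟨η i₀, hη i₀, hi₀⟩

lemma Matrix.abs_mul_apply_le {l m n : Type*} [Fintype m] {A : Matrix l m ℝ}
    {B : Matrix m n ℝ} {a b : ℝ} (hA : ∀ i j, |A i j| ≤ a) (hB : ∀ i j, |B i j| ≤ b)
    (i : l) (j : n) : |(A * B) i j| ≤ Fintype.card m * a * b :=
  calc |∑ k, A i k * B k j| ≤ ∑ k, |A i k * B k j| := Finset.abs_sum_le_sum_abs _ _
    _ ≤ ∑ _k : m, a * b := Finset.sum_le_sum fun k _ => by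
      rw [abs_mul]
      exact mul_le_mul (hA i k) (hB k j) (abs_nonneg _) ((abs_nonneg _).trans (hA i k))
    _ = Fintype.card m * a * b := by simp [mul_assoc]

lemma Matrix.indicator_apply_apply {α l m R : Type*} [Zero R] (s : Set α)
    (F : α → Matrix l m R) (t : α) (i : l) (j : m) :
    s.indicator F t i j = s.indicator (fun t => F t i j) t := by
  by_cases h : t ∈ s <;> simp [h]

lemma ae_forall_comp_sub {α : Type*} [Countable α] (a : α → ℝ) {p : ℝ → Prop}
    (h : ∀ᵐ s, p s) : ∀ᵐ t, ∀ x, p (t - a x) :=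
  ae_all_iff.2 fun x => (measurePreserving_sub_right volume (a x)).quasiMeasurePreserving.ae h

lemma finsum_list {ι M : Type*} [Fintype ι] [AddCommMonoid M] {f : List ι → M}
    (hf : (support f).Finite) : ∑ᶠ w, f w = f [] + ∑ i, ∑ᶠ v, f (i :: v) := by
  have hcons : Injective fun p : ι × List ι => p.1 :: p.2 := fun p q h => by
    simpa [Prod.ext_iff] using h
  have huniv : (univ : Set (List ι)) = insert [] (range fun p : ι × List ι => p.1 :: p.2) := by
    ext (_ | ⟨i, v⟩) <;> simp
  rw [← finsum_mem_univ, huniv, finsum_mem_insert' _ (by simp) (hf.subset inter_subset_right),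
    finsum_mem_range hcons, finsum_curry _ (hf.preimage hcons.injOn)]
  simp only [finsum_eq_sum_of_fintype]

lemma finsum_finsum_mem_fiber {α β γ M : Type*} [AddCommMonoid M] {e : α → β} {σ : γ → β}
    (hσ : Injective σ) (he : range e ⊆ range σ) {f : α → M} (hf : (support f).Finite) :
    ∑ᶠ c, ∑ᶠ a ∈ {a | e a = σ c}, f a = ∑ᶠ a, f a := by
  classical
  choose g hg using fun a => he (mem_range_self a)
  have hfiber (c : γ) : {a | e a = σ c} = g ⁻¹' {c} := by
    ext a
    simp [← hg a, hσ.eq_iff]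
  simp only [hfiber]
  rw [finsum_eq_sum f hf, ← Finset.sum_fiberwise_of_maps_to
    (g := g) (t := hf.toFinset.image g) fun a ha => Finset.mem_image_of_mem g ha,
    finsum_eq_sum_of_support_subset _ fun c hc => ?_]
  · refine Finset.sum_congr rfl fun c _ => finsum_mem_eq_sum_of_subset _ ?_ ?_
    · exact fun a ⟨hac, ha⟩ => Finset.mem_filter.2 ⟨hf.mem_toFinset.2 ha, hac⟩
    · exact fun a ha => (Finset.mem_filter.1 ha).2
  · obtain ⟨a, hac, ha⟩ := exists_ne_zero_of_finsum_mem_ne_zero hc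
    exact Finset.mem_image.2 ⟨a, hf.mem_toFinset.2 ha, hac⟩

noncomputable section

namespace DelaySystem

section Words

variable {ι : Type*} (η : ι → ℝ)

def wordDelay (w : List ι) : ℝ := (w.map η).sum

@[simp] lemma wordDelay_nil : wordDelay η [] = 0 := rfl

@[simp] lemma wordDelay_cons (i : ι) (w : List ι) :
    wordDelay η (i :: w) = η i + wordDelay η w := List.sum_cons

lemma length_mul_le_wordDelay {c : ℝ} (hc : ∀ i, c ≤ η i) (w : List ι) :
    w.length * c ≤ wordDelay η w := by
  induction w with
  | nil => simp
  | cons i w ih =>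
    simp only [List.length_cons, wordDelay_cons]
    push_cast
    linarith [hc i]

lemma range_wordDelay [Fintype ι] :
    range (wordDelay η) = {s | ∃ q : ι → ℕ, s = ∑ i, (q i : ℝ) * η i} := by
  ext s
  constructor
  · rintro ⟨w, rfl⟩
    classical
    refine ⟨fun i => w.count i, ?_⟩
    rw [wordDelay, Finset.sum_list_map_count, Finset.sum_subset (Finset.subset_univ _)]
    · simp
    · intro i _ hi
      simp [List.count_eq_zero_of_not_mem (by simpa using hi)]
  · rintro ⟨q, rfl⟩
    refine ⟨Finset.univ.toList.flatMap fun i => List.replicate (q i) i, ?_⟩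
    simp [wordDelay, List.flatMap, List.sum_flatten, List.map_flatten, Function.comp_def]

variable {η} [Finite ι]

lemma finite_setOf_wordDelay_le (hη : ∀ i, 0 < η i) (T : ℝ) : {w | wordDelay η w ≤ T}.Finite := by
  obtain ⟨c, hc, hcη⟩ := exists_pos_forall_le hη
  refine (List.finite_length_le ι ⌈T / c⌉₊).subset fun w hw => ?_
  have : (w.length : ℝ) ≤ T / c :=
    (le_div_iff₀ hc).2 ((length_mul_le_wordDelay η hcη w).trans hw)
  exact_mod_cast this.trans (Nat.le_ceil _)

lemma finite_setOf_wordDelay_eq (hη : ∀ i, 0 < η i) (s : ℝ) : {w | wordDelay η w = s}.Finite :=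
  (finite_setOf_wordDelay_le hη s).subset fun _ h => le_of_eq h

lemma finite_setOf_le_of_range_subset_range_wordDelay (hη : ∀ i, 0 < η i) {γ : Type*}
    {σ : γ → ℝ} (hσ : Injective σ) (hrange : range σ ⊆ range (wordDelay η)) (T : ℝ) :
    {q | σ q ≤ T}.Finite := by
  refine Finite.of_finite_image
    (((finite_setOf_wordDelay_le hη T).image (wordDelay η)).subset ?_) hσ.injOn
  rintro _ ⟨q, hq, rfl⟩
  obtain ⟨w, hw⟩ := hrange (mem_range_self q)
  exact ⟨w, hw.trans_le hq, hw⟩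

end Words

section WordMatrix

variable {ι n : Type*} [Fintype n] [DecidableEq n] (η : ι → ℝ) (D : ι → ℝ → Matrix n n ℝ)

-- `wordMatrix η D [i₁, …, i_k] t = D i₁ t * D i₂ (t - η i₁) * ⋯`, set to `0` unless the times
-- `t, t - η i₁, …, t - η i₁ - ⋯ - η i_(k-1)` are nonnegative and `t - wordDelay η w` is negative.
def wordMatrix : List ι → ℝ → Matrix n n ℝ
  | [], t => if t < 0 then 1 else 0
  | i :: w, t => if 0 ≤ t then D i t * wordMatrix w (t - η i) else 0

variable {η D}

lemma wordMatrix_of_neg {w : List ι} {t : ℝ} (ht : t < 0) (hw : w ≠ []) :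
    wordMatrix η D w t = 0 := by
  obtain ⟨i, v, rfl⟩ := List.exists_cons_of_ne_nil hw
  simp [wordMatrix, not_le.2 ht]

lemma lt_wordDelay_of_wordMatrix_ne_zero {w : List ι} {t : ℝ} (h : wordMatrix η D w t ≠ 0) :
    t < wordDelay η w := by
  induction w generalizing t with
  | nil =>
    by_contra ht
    exact h (if_neg (by simpa using ht))
  | cons i w ih =>
    by_cases ht : 0 ≤ t
    · rw [wordMatrix, if_pos ht] at h
      have := ih (right_ne_zero_of_mul h)
      rw [wordDelay_cons]
      linarith
    · simp [wordMatrix, ht] at h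

lemma wordDelay_le_of_wordMatrix_ne_zero {ηM : ℝ} (hηM : ∀ i, η i ≤ ηM) {w : List ι} {t : ℝ}
    (h : wordMatrix η D w t ≠ 0) : wordDelay η w ≤ max (t + ηM) 0 := by
  induction w generalizing t with
  | nil => simp
  | cons i w ih =>
    by_cases ht : 0 ≤ t
    · rw [wordMatrix, if_pos ht] at h
      have := ih (right_ne_zero_of_mul h)
      rw [wordDelay_cons, le_max_iff]
      left
      rcases le_max_iff.1 this with h' | h' <;> linarith [hηM i]
    · simp [wordMatrix, ht] at h

lemma mem_Ico_of_wordMatrix_ne_zero {ηM : ℝ} (hηM : ∀ i, η i ≤ ηM) {w : List ι} {t : ℝ}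
    (ht : 0 ≤ t) (h : wordMatrix η D w t ≠ 0) :
    t ∈ Ico (wordDelay η w - ηM) (wordDelay η w) := by
  have hlt := lt_wordDelay_of_wordMatrix_ne_zero h
  refine ⟨?_, hlt⟩
  rcases le_max_iff.1 (wordDelay_le_of_wordMatrix_ne_zero hηM h) with h' | h' <;> linarith

lemma finite_support_wordMatrix_mulVec [Finite ι] (hη : ∀ i, 0 < η i) {ηM : ℝ}
    (hηM : ∀ i, η i ≤ ηM) (t : ℝ) (g : List ι → n → ℝ) :
    (support fun w => wordMatrix η D w t *ᵥ g w).Finite :=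
  (finite_setOf_wordDelay_le hη (max (t + ηM) 0)).subset fun w hw =>
    wordDelay_le_of_wordMatrix_ne_zero (D := D) hηM fun h => hw (by simp [h])

lemma measurable_wordMatrix_apply (hD : ∀ i k l, Measurable fun t => D i t k l) (w : List ι)
    (k l : n) : Measurable fun t => wordMatrix η D w t k l := by
  induction w generalizing k l with
  | nil =>
    simp only [wordMatrix, apply_ite (fun A : Matrix n n ℝ => A k l), Matrix.zero_apply]
    exact Measurable.ite measurableSet_Iio measurable_const measurable_const
  | cons i w ih =>
    simp only [wordMatrix, apply_ite (fun A : Matrix n n ℝ => A k l), Matrix.zero_apply]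
    refine Measurable.ite measurableSet_Ici ?_ measurable_const
    simp only [Matrix.mul_apply]
    exact Finset.measurable_sum _ fun m _ => (hD i k m).mul ((ih m l).comp (measurable_sub_const _))

lemma exists_ae_abs_wordMatrix_apply_le
    (hD : ∀ i, ∃ B : ℝ, ∀ᵐ t ∂(volume.restrict (Ici 0)), ∀ k l, |D i t k l| ≤ B) (w : List ι) :
    ∃ C : ℝ, ∀ᵐ t, ∀ k l, |wordMatrix η D w t k l| ≤ C := by
  induction w with
  | nil =>
    refine ⟨1, ae_of_all _ fun t k l => ?_⟩
    by_cases ht : t < 0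
    · by_cases hkl : k = l <;> simp [wordMatrix, ht, Matrix.one_apply, hkl]
    · simp [wordMatrix, ht]
  | cons i w ih =>
    obtain ⟨B, hB⟩ := hD i
    obtain ⟨C, hC⟩ := ih
    refine ⟨max 0 (Fintype.card n * B * C), ?_⟩
    rw [ae_restrict_iff' measurableSet_Ici] at hB
    filter_upwards [hB, (measurePreserving_sub_right volume (η i)).quasiMeasurePreserving.ae hC]
      with t hBt hCt k l
    simp only [wordMatrix]
    split_ifs with ht
    · exact (Matrix.abs_mul_apply_le (hBt ht) hCt k l).trans (le_max_right _ _)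
    · simp

end WordMatrix

section Kernel

variable {ι n : Type*} [Fintype n] [DecidableEq n] (η : ι → ℝ) (D : ι → ℝ → Matrix n n ℝ)

-- The paper's `M_q` is `delayKernel η D (σ q)`, cut off to `(σ q - ηM, σ q]`.
def delayKernel (s t : ℝ) : Matrix n n ℝ :=
  ∑ᶠ w ∈ {w | wordDelay η w = s}, wordMatrix η D w t

variable {η D}

lemma delayKernel_eq_sum [Finite ι] (hη : ∀ i, 0 < η i) (s t : ℝ) :
    delayKernel η D s t = ∑ w ∈ (finite_setOf_wordDelay_eq hη s).toFinset, wordMatrix η D w t :=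
  finsum_mem_eq_finite_toFinset_sum _ _

lemma delayKernel_mulVec [Finite ι] (hη : ∀ i, 0 < η i) (s t : ℝ) (v : n → ℝ) :
    delayKernel η D s t *ᵥ v = ∑ᶠ w ∈ {w | wordDelay η w = s}, wordMatrix η D w t *ᵥ v := by
  rw [delayKernel_eq_sum hη, Matrix.sum_mulVec, finsum_mem_eq_finite_toFinset_sum]

lemma measurable_delayKernel_apply [Finite ι] (hη : ∀ i, 0 < η i)
    (hD : ∀ i k l, Measurable fun t => D i t k l) (s : ℝ) (k l : n) :
    Measurable fun t => delayKernel η D s t k l := by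
  simp only [delayKernel_eq_sum hη, Matrix.sum_apply]
  exact Finset.measurable_sum _ fun w _ => measurable_wordMatrix_apply hD w k l

lemma exists_ae_abs_delayKernel_apply_le [Finite ι] (hη : ∀ i, 0 < η i)
    (hD : ∀ i, ∃ B : ℝ, ∀ᵐ t ∂(volume.restrict (Ici 0)), ∀ k l, |D i t k l| ≤ B) (s : ℝ) :
    ∃ C : ℝ, ∀ᵐ t, ∀ k l, |delayKernel η D s t k l| ≤ C := by
  choose C hC using exists_ae_abs_wordMatrix_apply_le (η := η) hD
  refine ⟨∑ w ∈ (finite_setOf_wordDelay_eq hη s).toFinset, C w, ?_⟩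
  filter_upwards [ae_all_iff.2 hC] with t ht k l
  rw [delayKernel_eq_sum hη, Matrix.sum_apply]
  exact (Finset.abs_sum_le_sum_abs _ _).trans (Finset.sum_le_sum fun w _ => ht w k l)

lemma indicator_delayKernel_of_ne {ηM : ℝ} (hηM : ∀ i, η i ≤ ηM) {s t : ℝ} (ht : 0 ≤ t)
    (hts : t ≠ s - ηM) :
    (Ioc (s - ηM) s).indicator (delayKernel η D s) t = delayKernel η D s t := by
  by_cases h : t ∈ Ioc (s - ηM) s
  · exact indicator_of_mem h _
  rw [indicator_of_notMem h, eq_comm]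
  refine finsum_mem_eq_zero_of_forall_eq_zero fun w (hw : wordDelay η w = s) => ?_
  by_contra h0
  obtain ⟨h1, h2⟩ := hw ▸ mem_Ico_of_wordMatrix_ne_zero hηM ht h0
  exact h ⟨lt_of_le_of_ne h1 hts.symm, h2.le⟩

end Kernel

section Representation

variable {ι n : Type*} [Fintype n] [DecidableEq n] {η : ι → ℝ} {D : ι → ℝ → Matrix n n ℝ}

lemma finsum_wordMatrix_mulVec_of_neg {t : ℝ} (ht : t < 0) (g : List ι → n → ℝ) :
    ∑ᶠ w, wordMatrix η D w t *ᵥ g w = g [] := by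
  rw [finsum_eq_single _ [] fun w hw => by rw [wordMatrix_of_neg ht hw, zero_mulVec]]
  simp [wordMatrix, ht]

lemma finsum_wordMatrix_mulVec_of_nonneg [Fintype ι] (hη : ∀ i, 0 < η i) {ηM : ℝ}
    (hηM : ∀ i, η i ≤ ηM) {t : ℝ} (ht : 0 ≤ t) (g : List ι → n → ℝ) :
    ∑ᶠ w, wordMatrix η D w t *ᵥ g w =
      ∑ i, D i t *ᵥ ∑ᶠ v, wordMatrix η D v (t - η i) *ᵥ g (i :: v) := by
  rw [finsum_list (finite_support_wordMatrix_mulVec hη hηM t g)]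
  simp only [wordMatrix, if_neg (not_lt.2 ht), if_pos ht, zero_mulVec, zero_add]
  refine Finset.sum_congr rfl fun i _ => ?_
  rw [← mulVecLin_apply, map_finsum _ (finite_support_wordMatrix_mulVec hη hηM _ _)]
  simp [Matrix.mulVec_mulVec]

theorem eq_finsum_wordMatrix_mulVec [Fintype ι] (hη : ∀ i, 0 < η i) {ηM : ℝ}
    (hηM : ∀ i, η i ≤ ηM) {z φ : ℝ → n → ℝ} {t : ℝ} (ht : -ηM ≤ t)
    (hz : ∀ w, 0 ≤ t - wordDelay η w →
      z (t - wordDelay η w) = ∑ i, D i (t - wordDelay η w) *ᵥ z (t - wordDelay η w - η i))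
    (hφ : ∀ w, t - wordDelay η w ∈ Icc (-ηM) 0 → z (t - wordDelay η w) = φ (t - wordDelay η w)) :
    z t = ∑ᶠ w, wordMatrix η D w t *ᵥ φ (t - wordDelay η w) := by
  obtain ⟨c, hc, hcη⟩ := exists_pos_forall_le hη
  obtain ⟨N, hN⟩ := exists_nat_gt ((t + ηM) / c)
  rw [div_lt_iff₀ hc] at hN
  induction N generalizing t with
  | zero => simp only [CharP.cast_eq_zero, zero_mul] at hN; linarith
  | succ N ih =>
    rcases lt_or_ge t 0 with ht0 | ht0
    · rw [finsum_wordMatrix_mulVec_of_neg ht0]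
      simpa using hφ [] (by simpa using ⟨ht, ht0.le⟩)
    have hzt := hz [] (by simpa)
    simp only [wordDelay_nil, sub_zero] at hzt
    rw [hzt, finsum_wordMatrix_mulVec_of_nonneg hη hηM ht0]
    refine Finset.sum_congr rfl fun i _ => congrArg _ ?_
    simp only [wordDelay_cons, ← sub_sub]
    refine ih (by linarith [hηM i]) (fun v => ?_) (fun v => ?_) ?_
    · simpa only [wordDelay_cons, ← sub_sub] using hz (i :: v)
    · simpa only [wordDelay_cons, ← sub_sub] using hφ (i :: v)
    · push_cast at hN
      linarith [hcη i]

theorem ae_eq_finsum_wordMatrix_mulVec [Fintype ι] (hη : ∀ i, 0 < η i) {ηM : ℝ}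
    (hηM : ∀ i, η i ≤ ηM) (hηM0 : 0 ≤ ηM) {z φ : ℝ → n → ℝ}
    (hz : ∀ᵐ t ∂(volume.restrict (Ici 0)), z t = ∑ i, D i t *ᵥ z (t - η i))
    (hφ : z =ᵐ[volume.restrict (Icc (-ηM) 0)] φ) :
    ∀ᵐ t ∂(volume.restrict (Ici 0)), z t = ∑ᶠ w, wordMatrix η D w t *ᵥ φ (t - wordDelay η w) := by
  have hz' := ae_forall_comp_sub (wordDelay η) ((ae_restrict_iff' measurableSet_Ici).1 hz)
  have hφ' := ae_forall_comp_sub (wordDelay η) ((ae_restrict_iff' measurableSet_Icc).1 hφ)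
  rw [ae_restrict_iff' measurableSet_Ici]
  filter_upwards [hz', hφ'] with t hzt hφt ht
  exact eq_finsum_wordMatrix_mulVec hη hηM (by linarith [mem_Ici.1 ht]) hzt hφt

lemma finsum_indicator_delayKernel_mulVec [Finite ι] {γ : Type*} (hη : ∀ i, 0 < η i) {ηM : ℝ}
    (hηM : ∀ i, η i ≤ ηM) {σ : γ → ℝ} (hσ : Injective σ) (hrange : range (wordDelay η) ⊆ range σ)
    {t : ℝ} (ht : 0 ≤ t) (htσ : ∀ q, t ≠ σ q - ηM) (φ : ℝ → n → ℝ) :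
    ∑ᶠ q, (Ioc (σ q - ηM) (σ q)).indicator (delayKernel η D (σ q)) t *ᵥ φ (t - σ q) =
      ∑ᶠ w, wordMatrix η D w t *ᵥ φ (t - wordDelay η w) := by
  rw [← finsum_finsum_mem_fiber hσ hrange (finite_support_wordMatrix_mulVec hη hηM t _)]
  refine finsum_congr fun q => ?_
  rw [indicator_delayKernel_of_ne hηM ht (htσ q), delayKernel_mulVec hη]
  exact finsum_mem_congr rfl fun w (hw : wordDelay η w = σ q) => by rw [hw]

end Representation

end DelaySystem

end

open DelaySystem

/-- There is a family `(Mq q)_{q ∈ ℕ}` of matrix-valued maps such that: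
(i) each `Mq q` is in `L^∞_loc(ℝ, ℝ^{d×d})`; (ii) `Mq q t = 0` for `t ∉ (σ q − ηM, σ q]`;
(iii) for every `p ∈ [1,∞]` and every `φ ∈ L^p([−ηM,0], ℝ^d)`, the solution `z` of the
difference-delay system with initial condition `φ` satisfies
`z t = ∑ᶠ q, Mq q t *ᵥ φ (t − σ q)` for a.e. `t ≥ 0`, the sum having finite support.
Here `σ` is the increasing enumeration (starting at `σ 0 = 0`) of the additive semigroup
generated by the delays. -/
theorem delay_solution_representation
    (d M : ℕ) (hM : 1 ≤ M)
    (η : Fin M → ℝ) (hηpos : ∀ i, 0 < η i) (hηmono : Monotone η)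
    (D : Fin M → ℝ → Matrix (Fin d) (Fin d) ℝ)
    (hDmeas : ∀ i k l, Measurable fun t => D i t k l)
    (hDbdd : ∀ i, ∃ B : ℝ, ∀ᵐ t ∂(volume.restrict (Set.Ici (0 : ℝ))), ∀ k l, |D i t k l| ≤ B)
    (ηM : ℝ) (hηM : ηM = η ⟨M - 1, by omega⟩)
    (σ : ℕ → ℝ) (hσmono : StrictMono σ)
    (hσrange : Set.range σ = {s : ℝ | ∃ q : Fin M → ℕ, s = ∑ i, (q i : ℝ) * η i}) :
    ∃ Mq : ℕ → ℝ → Matrix (Fin d) (Fin d) ℝ,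
      -- (i) each `Mq q` belongs to `L^∞_loc(ℝ, ℝ^{d×d})`
      (∀ q, (∀ k l, Measurable fun t => Mq q t k l) ∧
        ∀ r : ℝ, ∃ B : ℝ, ∀ᵐ t ∂(volume.restrict (Set.Icc (-r) r)), ∀ k l, |Mq q t k l| ≤ B) ∧
      -- (ii) support condition
      (∀ q t, t ∉ Set.Ioc (σ q - ηM) (σ q) → Mq q t = 0) ∧
      -- the sum below is finite at each time
      (∀ t : ℝ, {q : ℕ | Mq q t ≠ 0}.Finite) ∧
      -- (iii) representation formula for all solutions
      (∀ p : ℝ≥0∞, 1 ≤ p → ∀ φ : ℝ → Fin d → ℝ,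
        MemLp φ p (volume.restrict (Set.Icc (-ηM) 0)) →
        ∀ z, DelaySol d M η D ηM p z → z =ᵐ[volume.restrict (Set.Icc (-ηM) 0)] φ →
        ∀ᵐ t ∂(volume.restrict (Set.Ici (0 : ℝ))),
          z t = ∑ᶠ q : ℕ, (Mq q t).mulVec (φ (t - σ q))) := by
  have hηle : ∀ i, η i ≤ ηM := fun i => hηM ▸ hηmono (Fin.le_def.2 (Nat.le_sub_one_of_lt i.isLt))
  have hηM0 : 0 ≤ ηM := hηM ▸ (hηpos _).le
  have hrange : range σ = range (wordDelay η) := hσrange.trans (range_wordDelay η).symm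
  refine ⟨fun q => (Ioc (σ q - ηM) (σ q)).indicator (delayKernel η D (σ q)),
    fun q => ⟨fun k l => ?_, fun r => ?_⟩, fun q t ht => indicator_of_notMem ht _, fun t => ?_, ?_⟩
  · simp only [Matrix.indicator_apply_apply]
    exact (measurable_delayKernel_apply hηpos hDmeas _ k l).indicator measurableSet_Ioc
  · obtain ⟨C, hC⟩ := exists_ae_abs_delayKernel_apply_le hηpos hDbdd (σ q)
    refine ⟨max C 0, ae_restrict_of_ae (hC.mono fun t ht k l => ?_)⟩
    dsimp only
    rw [Matrix.indicator_apply_apply, indicator_apply]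
    split_ifs
    exacts [(ht k l).trans (le_max_left _ _), by simp]
  · refine (finite_setOf_le_of_range_subset_range_wordDelay hηpos hσmono.injective hrange.le
      (t + ηM)).subset fun q hq => ?_
    by_contra h
    exact hq (indicator_of_notMem (fun hm => h (show σ q ≤ t + ηM by linarith [hm.1])) _)
  · intro p _ φ _ z hz hzφ
    -- `Mq q` is cut off to `Ioc` but the kernel lives on `Ico`: avoid the null set of endpoints.
    have hgen : ∀ᵐ t, ∀ q, t ≠ σ q - ηM := by
      filter_upwards [(countable_range fun q => σ q - ηM).ae_notMem volume] with t ht q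
      exact fun h => ht ⟨q, h.symm⟩
    filter_upwards [ae_eq_finsum_wordMatrix_mulVec hηpos hηle hηM0 hz.2 hzφ,
      ae_restrict_of_ae hgen, ae_restrict_mem measurableSet_Ici] with t hzt hgen ht
    rw [hzt, finsum_indicator_delayKernel_mulVec hηpos hηle hσmono.injective hrange.ge ht hgen]
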